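/- The quotient algebra MvPolynomial (Fin n) (ZMod 2) ⧸ I₁(L) is a finite-dimensional vector space over ZMod 2, and its dimension equals the number of cosets Nat.card (G ⧸ L), where I₁(L) is the ideal generated by {X^{lift(c)} − 1 : c ∈ L} ∪ {X_i^{g i} − 1 : i ∈ Fin n}. -/

import Mathlib

open MvPolynomial

/-- The ideal `I₁(L)` generated by `{X^(lift c) - 1 : c ∈ L} ∪ {X i ^ g i - 1 : i}`
in `MvPolynomial (Fin n) (ZMod 2)`. -/
noncomputable def latticeIdeal (n : ℕ) (g : Fin n → ℕ)
    (L : AddSubgroup (∀ i, ZMod (g i))) : Ideal (MvPolynomial (Fin n) (ZMod 2)) :=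
  Ideal.span
    ({ p : MvPolynomial (Fin n) (ZMod 2) |
        ∃ c ∈ L, p = monomial
          (Finsupp.equivFunOnFinite.symm fun i => (c i).val) (1 : ZMod 2) - 1 } ∪
     { p : MvPolynomial (Fin n) (ZMod 2) |
        ∃ i : Fin n, p = X i ^ g i - 1 })

/-! The quotient is isomorphic, as a `ZMod 2`-algebra, to the group algebra of `G ⧸ L`.
Sending `X^u` to the class of `u mod g` kills both families of generators of `I₁(L)`; conversely
the class of `c` is sent to `X^(lift c)`, which is well defined and multiplicative because
monomials whose exponents agree modulo `g` coincide modulo the relations `X_i^(g i) = 1`.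
The group algebra has the basis `G ⧸ L`. -/

theorem MvPolynomial.mk_monomial_eq_of_modEq {σ R : Type*} [Fintype σ] [CommRing R]
    {I : Ideal (MvPolynomial σ R)} {g : σ → ℕ} (hX : ∀ i, X i ^ g i - 1 ∈ I)
    {d d' : σ →₀ ℕ} (h : ∀ i, d i ≡ d' i [MOD g i]) :
    Ideal.Quotient.mk I (monomial d 1) = Ideal.Quotient.mk I (monomial d' 1) := by
  have hx (i : σ) : Ideal.Quotient.mk I (X i) ^ g i = 1 := by
    rw [← map_pow, ← map_one (Ideal.Quotient.mk I), Ideal.Quotient.eq]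
    exact hX i
  simp only [monomial_eq, C_1, one_mul, Finsupp.prod_fintype _ _ fun _ => pow_zero _, map_prod,
    map_pow]
  exact Finset.prod_congr rfl fun i _ => pow_eq_pow_of_modEq (h i) (hx i)

noncomputable section LatticeIdeal

variable {n : ℕ} {g : Fin n → ℕ}

variable (g) in
def expMod : (Fin n →₀ ℕ) →+ ∀ i, ZMod (g i) :=
  AddMonoidHom.pi fun i => (Nat.castAddMonoidHom (ZMod (g i))).comp (Finsupp.applyAddHom i)

@[simp]
theorem expMod_apply (d : Fin n →₀ ℕ) (i : Fin n) : expMod g d i = d i := rfl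

theorem expMod_eq_iff {d d' : Fin n →₀ ℕ} :
    expMod g d = expMod g d' ↔ ∀ i, d i ≡ d' i [MOD g i] := by
  simp only [funext_iff, expMod_apply, ZMod.natCast_eq_natCast_iff]

def liftVal (c : ∀ i, ZMod (g i)) : Fin n →₀ ℕ :=
  Finsupp.equivFunOnFinite.symm fun i => (c i).val

@[simp]
theorem expMod_liftVal [∀ i, NeZero (g i)] (c : ∀ i, ZMod (g i)) :
    expMod g (liftVal c) = c := by
  ext i
  simp [liftVal]

variable (L : AddSubgroup (∀ i, ZMod (g i)))

theorem X_pow_sub_one_mem_latticeIdeal (i : Fin n) : X i ^ g i - 1 ∈ latticeIdeal n g L :=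
  Ideal.subset_span (Or.inr ⟨i, rfl⟩)

theorem monomial_liftVal_sub_one_mem_latticeIdeal {c : ∀ i, ZMod (g i)} (hc : c ∈ L) :
    monomial (liftVal c) 1 - 1 ∈ latticeIdeal n g L :=
  Ideal.subset_span (Or.inl ⟨c, hc, rfl⟩)

theorem mk_monomial_eq_of_expMod_eq {d d' : Fin n →₀ ℕ} (h : expMod g d = expMod g d') :
    Ideal.Quotient.mk (latticeIdeal n g L) (monomial d 1) =
      Ideal.Quotient.mk (latticeIdeal n g L) (monomial d' 1) :=
  mk_monomial_eq_of_modEq (X_pow_sub_one_mem_latticeIdeal L) (expMod_eq_iff.1 h)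

def toGroupAlgebra (k : Type*) [CommSemiring k] :
    MvPolynomial (Fin n) k →ₐ[k] AddMonoidAlgebra k ((∀ i, ZMod (g i)) ⧸ L) :=
  AddMonoidAlgebra.mapDomainAlgHom k k ((QuotientAddGroup.mk' L).comp (expMod g))

theorem toGroupAlgebra_monomial {k : Type*} [CommSemiring k] (d : Fin n →₀ ℕ) (r : k) :
    toGroupAlgebra L k (monomial d r) = AddMonoidAlgebra.single (expMod g d : _ ⧸ L) r := by
  simp [toGroupAlgebra, ← single_eq_monomial]

variable [∀ i, NeZero (g i)]

theorem latticeIdeal_le_ker_toGroupAlgebra :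
    latticeIdeal n g L ≤ RingHom.ker (toGroupAlgebra L (ZMod 2)) := by
  rw [latticeIdeal, Ideal.span_le]
  rintro _ (⟨c, hc, rfl⟩ | ⟨i, rfl⟩) <;>
    simp only [SetLike.mem_coe, RingHom.mem_ker, map_sub, map_one, sub_eq_zero]
  · rw [← liftVal, toGroupAlgebra_monomial, expMod_liftVal,
      (QuotientAddGroup.eq_zero_iff c).2 hc]
    rfl
  · have : expMod g (Finsupp.single i (g i)) = 0 := by
      ext j
      obtain rfl | hj := eq_or_ne i j <;> simp [*]
    rw [X_pow_eq_monomial, toGroupAlgebra_monomial, this, QuotientAddGroup.mk_zero]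
    rfl

def latticeMonomialHom :
    (∀ i, ZMod (g i)) →+ Additive (MvPolynomial (Fin n) (ZMod 2) ⧸ latticeIdeal n g L) where
  toFun c := .ofMul (Ideal.Quotient.mk _ (monomial (liftVal c) 1))
  map_zero' := congrArg _ <| mk_monomial_eq_of_expMod_eq L (by simp)
  map_add' c d := by
    rw [← ofMul_mul, ← map_mul, monomial_mul, one_mul]
    exact congrArg _ (mk_monomial_eq_of_expMod_eq L (by simp))

def ofGroupAlgebra :
    AddMonoidAlgebra (ZMod 2) ((∀ i, ZMod (g i)) ⧸ L) →ₐ[ZMod 2]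
      MvPolynomial (Fin n) (ZMod 2) ⧸ latticeIdeal n g L :=
  AddMonoidAlgebra.lift _ _ _ <| AddMonoidHom.toMultiplicativeLeft <|
    QuotientAddGroup.lift L (latticeMonomialHom L) fun _ hc =>
      (Ideal.Quotient.mk_eq_one_iff_sub_mem _).2 (monomial_liftVal_sub_one_mem_latticeIdeal L hc)

theorem ofGroupAlgebra_single_mk (c : ∀ i, ZMod (g i)) :
    ofGroupAlgebra L (AddMonoidAlgebra.single (c : _ ⧸ L) 1) =
      Ideal.Quotient.mk _ (monomial (liftVal c) 1) := by
  simp [ofGroupAlgebra, latticeMonomialHom]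

def quotientToGroupAlgebra :
    MvPolynomial (Fin n) (ZMod 2) ⧸ latticeIdeal n g L →ₐ[ZMod 2]
      AddMonoidAlgebra (ZMod 2) ((∀ i, ZMod (g i)) ⧸ L) :=
  Ideal.Quotient.liftₐ _ (toGroupAlgebra L (ZMod 2)) (latticeIdeal_le_ker_toGroupAlgebra L)

theorem quotientToGroupAlgebra_mk (p : MvPolynomial (Fin n) (ZMod 2)) :
    quotientToGroupAlgebra L (Ideal.Quotient.mk _ p) = toGroupAlgebra L (ZMod 2) p :=
  rfl

def quotientLatticeIdealEquiv :
    (MvPolynomial (Fin n) (ZMod 2) ⧸ latticeIdeal n g L) ≃ₐ[ZMod 2]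
      AddMonoidAlgebra (ZMod 2) ((∀ i, ZMod (g i)) ⧸ L) := by
  refine AlgEquiv.ofAlgHom (quotientToGroupAlgebra L) (ofGroupAlgebra L) ?_ ?_
  · refine AddMonoidAlgebra.algHom_ext (fun q => ?_) (Subsingleton.elim _ _)
    induction q using QuotientAddGroup.induction_on with | H c => ?_
    rw [AlgHom.comp_apply, ofGroupAlgebra_single_mk, quotientToGroupAlgebra_mk,
      toGroupAlgebra_monomial, expMod_liftVal, AlgHom.id_apply]
  · refine Ideal.Quotient.algHom_ext _ (MvPolynomial.algHom_ext fun i => ?_)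
    rw [AlgHom.id_comp, AlgHom.comp_apply, AlgHom.comp_apply, Ideal.Quotient.mkₐ_eq_mk, X,
      quotientToGroupAlgebra_mk, toGroupAlgebra_monomial, ofGroupAlgebra_single_mk]
    exact mk_monomial_eq_of_expMod_eq L (expMod_liftVal _)

end LatticeIdeal

/-- The quotient algebra `MvPolynomial (Fin n) (ZMod 2) ⧸ I₁(L)`
is a finite-dimensional `ZMod 2`-vector space of dimension `Nat.card (G ⧸ L)`. -/
theorem stmt_10 (n : ℕ) (g : Fin n → ℕ) (hg : ∀ i, 1 ≤ g i)
    (L : AddSubgroup (∀ i, ZMod (g i))) :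
    FiniteDimensional (ZMod 2) (MvPolynomial (Fin n) (ZMod 2) ⧸ latticeIdeal n g L) ∧
    Module.finrank (ZMod 2) (MvPolynomial (Fin n) (ZMod 2) ⧸ latticeIdeal n g L) =
      Nat.card ((∀ i, ZMod (g i)) ⧸ L) := by
  have (i : Fin n) : NeZero (g i) := NeZero.of_pos (hg i)
  let e := (quotientLatticeIdealEquiv L).toLinearEquiv
  let b := AddMonoidAlgebra.basis ((∀ i, ZMod (g i)) ⧸ L) (ZMod 2)
  have : Module.Finite (ZMod 2) (AddMonoidAlgebra (ZMod 2) ((∀ i, ZMod (g i)) ⧸ L)) :=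
    Module.Finite.of_basis b
  exact ⟨Module.Finite.equiv e.symm, e.finrank_eq.trans (Module.finrank_eq_nat_card_basis b)⟩
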